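/- arXiv:1202.3497 — 5 statements merged into one kernel-verified Lean document; each statement's English description precedes it below -/
import Mathlib

section
/- Let (P, A, →) be a labelled transition system with P and A finite, and consider Hennessy–Milner logic with variables indexed by I = P, with semantics V⟦·⟧σ for σ : P → 𝒫(P). Define the declaration D : P → Formulas by D(p) = ⋀_{a ∈ A} ⋀_{p' : p →a p'} ⟨a⟩X_{p'}, and define F : 𝒫(P × P) → 𝒫(P × P) by (p,q) ∈ F(S) iff for all a and p' with p →a p' there exists q' with q →a q' and (p',q') ∈ S. For S ⊆ P × P let σ_S : P → 𝒫(P) be σ_S(p) = {q | (p,q) ∈ S}. Then D expresses F: for every S ⊆ P × P and all p, q ∈ P, (p,q) ∈ F(S) iff q ∈ V⟦D(p)⟧σ_S; and consequently D characterizes the simulation preorder νF: (p,q) ∈ νF iff q ∈ (νV⟦D⟧)(p). -/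
/-- Formulas of Hennessy–Milner logic over actions A with variables indexed by I. -/
inductive Formula (A I : Type*) where
  | tt : Formula A I
  | ff : Formula A I
  | var : I → Formula A I
  | and : Formula A I → Formula A I → Formula A I
  | or : Formula A I → Formula A I → Formula A I
  | dia : A → Formula A I → Formula A I
  | box : A → Formula A I → Formula A I

/-- The semantics V⟦F⟧σ of a formula relative to an LTS (P, A, Tr) and a
variable interpretation σ : I → 𝒫(P). -/
def sem {P A I : Type*} (Tr : P → A → P → Prop) : Formula A I → (I → Set P) → Set P
  | .tt, _ => Set.univ
  | .ff, _ => ∅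
  | .var i, σ => σ i
  | .and f g, σ => sem Tr f σ ∩ sem Tr g σ
  | .or f g, σ => sem Tr f σ ∪ sem Tr g σ
  | .dia a f, σ => {p | ∃ q, Tr p a q ∧ q ∈ sem Tr f σ}
  | .box a f, σ => {p | ∀ q, Tr p a q → q ∈ sem Tr f σ}

/-- The derived function V⟦D⟧ of a declaration D : I → Formulas:
(V⟦D⟧σ)(i) = V⟦D(i)⟧σ. -/
def declSem {P A I : Type*} (Tr : P → A → P → Prop) (D : I → Formula A I) :
    (I → Set P) → (I → Set P) := fun σ i => sem Tr (D i) σ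

/-- Finite conjunction of a list of formulas. -/
def bigAnd {A I : Type*} : List (Formula A I) → Formula A I
  | [] => .tt
  | f :: fs => .and f (bigAnd fs)

/-- Finite disjunction of a list of formulas. -/
def bigOr {A I : Type*} : List (Formula A I) → Formula A I
  | [] => .ff
  | f :: fs => .or f (bigOr fs)

/-- The declaration D(p) = ⋀_{a ∈ A} ⋀_{p' : p →a p'} ⟨a⟩X_{p'}. -/
noncomputable def Dsim {P A : Type*} [Fintype P] [Fintype A] (Tr : P → A → P → Prop)
    [∀ p a p', Decidable (Tr p a p')] (p : P) : Formula A P :=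
  bigAnd ((Finset.univ : Finset A).toList.map fun a =>
    bigAnd (((Finset.univ : Finset P).filter (fun p' => Tr p a p')).toList.map fun p' =>
      .dia a (.var p')))

/-- The declaration D̃(p) = ⋀_{a ∈ A} [a] ⋁_{p' : p →a p'} X_{p'}. -/
noncomputable def Dop {P A : Type*} [Fintype P] [Fintype A] (Tr : P → A → P → Prop)
    [∀ p a p', Decidable (Tr p a p')] (p : P) : Formula A P :=
  bigAnd ((Finset.univ : Finset A).toList.map fun a =>
    .box a (bigOr (((Finset.univ : Finset P).filter (fun p' => Tr p a p')).toList.map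
      fun p' => .var p')))

/-- The simulation functional: (p,q) ∈ F(S) iff every transition p →a p' is
matched by some q →a q' with (p',q') ∈ S. -/
def Fsim {P A : Type*} (Tr : P → A → P → Prop) (S : Set (P × P)) : Set (P × P) :=
  {pq | ∀ (a : A) (p' : P), Tr pq.1 a p' → ∃ q' : P, Tr pq.2 a q' ∧ (p', q') ∈ S}

/-- The inverse of a binary relation, `S⁻¹ = {(q,p) | (p,q) ∈ S}`. -/
def relInv {P : Type*} (S : Set (P × P)) : Set (P × P) := {x | (x.2, x.1) ∈ S}

/-- F̃(S) = (F(S⁻¹))⁻¹ for the simulation functional F. -/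
def Fop {P A : Type*} (Tr : P → A → P → Prop) (S : Set (P × P)) : Set (P × P) :=
  relInv (Fsim Tr (relInv S))

/-- The variable interpretation σ_S(p) = {q | (p,q) ∈ S} associated to a relation S. -/
def sigmaOf {P : Type*} (S : Set (P × P)) : P → Set P := fun p => {q | (p, q) ∈ S}

/-- The greatest fixed point of a monotone endofunction of a complete lattice,
given by the Knaster–Tarski construction. -/
def nu {α : Type*} [CompleteLattice α] (f : α → α) : α := sSup {x | x ≤ f x}


lemma sem_bigAnd {P A I : Type*} (Tr : P → A → P → Prop) (L : List (Formula A I))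
    (σ : I → Set P) (q : P) :
    q ∈ sem Tr (bigAnd L) σ ↔ ∀ f ∈ L, q ∈ sem Tr f σ := by
  induction L with
  | nil => simp [bigAnd, sem]
  | cons f fs ih => simp [bigAnd, sem, ih]

lemma expresses {P A : Type*} [Fintype P] [Fintype A] (Tr : P → A → P → Prop)
    [∀ p a p', Decidable (Tr p a p')] (S : Set (P × P)) (p q : P) :
    (p, q) ∈ Fsim Tr S ↔ q ∈ sem Tr (Dsim Tr p) (sigmaOf S) := by
  simp only [Fsim, Set.mem_setOf_eq, Dsim, sem_bigAnd, List.mem_map, Finset.mem_toList,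
    Finset.mem_univ, Finset.mem_filter, true_and]
  constructor
  · rintro h f ⟨a, -, rfl⟩
    rw [sem_bigAnd]
    simp only [List.mem_map, Finset.mem_toList, Finset.mem_filter, Finset.mem_univ, true_and]
    rintro g ⟨p', hp', rfl⟩
    exact h a p' hp'
  · intro h a p' hp'
    have h1 := h _ ⟨a, rfl⟩
    rw [sem_bigAnd] at h1
    exact h1 _ (List.mem_map.2 ⟨p', Finset.mem_toList.2
      (Finset.mem_filter.2 ⟨Finset.mem_univ _, hp'⟩), rfl⟩)

/-- For a finite LTS, the declaration
D(p) = ⋀_{a ∈ A} ⋀_{p' : p →a p'} ⟨a⟩X_{p'} expresses the simulation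
functional F, and consequently characterizes the simulation preorder νF. -/
theorem stmt12 {P A : Type*} [Fintype P] [Fintype A] (Tr : P → A → P → Prop)
    [∀ p a p', Decidable (Tr p a p')] :
    (∀ (S : Set (P × P)) (p q : P),
      (p, q) ∈ Fsim Tr S ↔ q ∈ sem Tr (Dsim Tr p) (sigmaOf S)) ∧
    (∀ p q : P, (p, q) ∈ nu (Fsim Tr) ↔ q ∈ nu (declSem Tr (Dsim Tr)) p) := by
  refine ⟨expresses Tr, fun p q => ?_⟩
  have key : ∀ S : Set (P × P), sigmaOf (Fsim Tr S) = declSem Tr (Dsim Tr) (sigmaOf S) := by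
    intro S
    funext p'
    ext q'
    exact expresses Tr S p' q'
  constructor
  · intro hpq
    obtain ⟨S, hS, hmem⟩ : ∃ S ∈ {x | x ≤ Fsim Tr x}, (p, q) ∈ S := by
      simpa [nu, Set.sSup_eq_sUnion, Set.mem_sUnion] using hpq
    have hσ : sigmaOf S ≤ declSem Tr (Dsim Tr) (sigmaOf S) := by
      rw [← key]
      intro p' q' h
      exact hS h
    have hle : sigmaOf S ≤ nu (declSem Tr (Dsim Tr)) := le_sSup hσ
    exact hle p hmem
  · intro hq
    have : ∃ σ ∈ {x | x ≤ declSem Tr (Dsim Tr) x}, q ∈ σ p := by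
      have := hq
      rw [nu, sSup_apply] at this
      simpa [iSup_apply, Set.mem_iUnion] using this
    obtain ⟨σ, hσ, hmem⟩ := this
    set S : Set (P × P) := {x | x.2 ∈ σ x.1} with hSdef
    have hsig : sigmaOf S = σ := rfl
    have hS : S ≤ Fsim Tr S := by
      intro x hx
      exact (expresses Tr S x.1 x.2).mpr (hσ x.1 hx)
    have hle : S ≤ nu (Fsim Tr) := le_sSup hS
    exact hle hmem
end

section
/- Let (P, A, →) be a labelled transition system with P and A finite, and consider Hennessy–Milner logic with variables indexed by I = P, with semantics V⟦·⟧σ for σ : P → 𝒫(P). Define the declaration D̃ : P → Formulas by D̃(p) = ⋀_{a ∈ A} [a] ⋁_{p' : p →a p'} X_{p'}. Define F : 𝒫(P × P) → 𝒫(P × P) by (p,q) ∈ F(S) iff for all a and p' with p →a p' there exists q' with q →a q' and (p',q') ∈ S, and let F̃(S) = (F(S⁻¹))⁻¹. For S ⊆ P × P let σ_S(p) = {q | (p,q) ∈ S}. Then D̃ expresses F̃: for every S ⊆ P × P and all p, q ∈ P, (p,q) ∈ F̃(S) iff q ∈ V⟦D̃(p)⟧σ_S; and consequently D̃ characterizes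 ν F̃: (p,q) ∈ ν F̃ iff q ∈ (νV⟦D̃⟧)(p). -/
lemma sem_bigOr {P A I : Type*} (Tr : P → A → P → Prop) (L : List (Formula A I))
    (σ : I → Set P) (q : P) :
    q ∈ sem Tr (bigOr L) σ ↔ ∃ f ∈ L, q ∈ sem Tr f σ := by
  induction L with
  | nil => simp [bigOr, sem]
  | cons f fs ih => simp [bigOr, sem, ih]

lemma part1 {P A : Type*} [Fintype P] [Fintype A] (Tr : P → A → P → Prop)
    [∀ p a p', Decidable (Tr p a p')] (S : Set (P × P)) (p q : P) :
    (p, q) ∈ Fop Tr S ↔ q ∈ sem Tr (Dop Tr p) (sigmaOf S) := by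
  unfold Dop
  rw [sem_bigAnd]
  simp only [Fop, relInv, Fsim, Set.mem_setOf_eq]
  constructor
  · intro h f hf
    obtain ⟨a, -, rfl⟩ := List.mem_map.1 hf
    simp only [sem, Set.mem_setOf_eq]
    intro q' hq'
    rw [sem_bigOr]
    obtain ⟨p', hp', hS⟩ := h a q' hq'
    exact ⟨_, List.mem_map.2 ⟨p', Finset.mem_toList.2 (Finset.mem_filter.2 ⟨Finset.mem_univ _, hp'⟩), rfl⟩, hS⟩
  · intro h a q' hq'
    have := h _ (List.mem_map.2 ⟨a, Finset.mem_toList.2 (Finset.mem_univ a), rfl⟩)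
    simp only [sem, Set.mem_setOf_eq] at this
    have := this q' hq'
    rw [sem_bigOr] at this
    obtain ⟨f, hf, hqf⟩ := this
    obtain ⟨p', hp', rfl⟩ := List.mem_map.1 hf
    exact ⟨p', (Finset.mem_filter.1 (Finset.mem_toList.1 hp')).2, hqf⟩
/-- For a finite LTS, the declaration
D̃(p) = ⋀_{a ∈ A} [a] ⋁_{p' : p →a p'} X_{p'} expresses the functional
F̃(S) = (F(S⁻¹))⁻¹, and consequently characterizes ν F̃. -/
theorem stmt13 {P A : Type*} [Fintype P] [Fintype A] (Tr : P → A → P → Prop)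
    [∀ p a p', Decidable (Tr p a p')] :
    (∀ (S : Set (P × P)) (p q : P),
      (p, q) ∈ Fop Tr S ↔ q ∈ sem Tr (Dop Tr p) (sigmaOf S)) ∧
    (∀ p q : P, (p, q) ∈ nu (Fop Tr) ↔ q ∈ nu (declSem Tr (Dop Tr)) p) := by
  have h1 : ∀ (S : Set (P × P)) (p q : P),
      (p, q) ∈ Fop Tr S ↔ q ∈ sem Tr (Dop Tr p) (sigmaOf S) := part1 Tr
  refine ⟨h1, fun p q => ?_⟩
  constructor
  · rintro hpq
    obtain ⟨S, hS, hmem⟩ : ∃ S ∈ {x | x ≤ Fop Tr x}, (p, q) ∈ S := by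
      simpa [nu, Set.sSup_eq_sUnion, Set.mem_sUnion] using hpq
    have hσ : sigmaOf S ≤ declSem Tr (Dop Tr) (sigmaOf S) := by
      intro r s hs
      exact (h1 S r s).1 (hS hs)
    have : q ∈ nu (declSem Tr (Dop Tr)) p := by
      have : sigmaOf S ≤ nu (declSem Tr (Dop Tr)) := le_sSup hσ
      exact this p hmem
    exact this
  · intro hq
    have : q ∈ (sSup {x | x ≤ declSem Tr (Dop Tr) x}) p := hq
    rw [sSup_apply] at this
    simp only [Set.iSup_eq_iUnion, Set.mem_iUnion] at this
    obtain ⟨⟨σ, hσ⟩, hqσ⟩ := this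
    set S : Set (P × P) := {x | x.2 ∈ σ x.1} with hSdef
    have hsig : sigmaOf S = σ := rfl
    have hSle : S ≤ Fop Tr S := by
      rintro ⟨r, s⟩ hs
      exact (h1 S r s).2 (by rw [hsig]; exact hσ r hs)
    have hmemS : S ∈ {x : Set (P × P) | x ≤ Fop Tr x} := hSle
    have hle : S ≤ nu (Fop Tr) := le_sSup hmemS
    exact hle (show (p, q) ∈ S from hqσ)
end

section
/- Let (P, A, →) be a labelled transition system, I = P, and let D : P → Formulas be a declaration in Hennessy–Milner logic with variables indexed by P, with monotone derived function V⟦D⟧ on P → 𝒫(P). Let F : 𝒫(P × P) → 𝒫(P × P) be monotone. If D expresses F, i.e., for every S ⊆ P × P and all p, q ∈ P, (p,q) ∈ F(S) iff q ∈ V⟦D(p)⟧σ_S (where σ_S(p) = {q | (p,q) ∈ S}), then D characterizes νF: for all p, q ∈ P, (p,q) ∈ νF if and only if q ∈ (νV⟦D⟧)(p). -/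
/-- If a declaration D expresses a monotone functional F on
𝒫(P × P) (i.e. (p,q) ∈ F(S) iff q ∈ V⟦D(p)⟧σ_S for all S, p, q), then D
characterizes νF: (p,q) ∈ νF iff q ∈ (νV⟦D⟧)(p). -/
theorem stmt14 {P A : Type*} (Tr : P → A → P → Prop) (D : P → Formula A P)
    (F : Set (P × P) → Set (P × P)) (hF : Monotone F)
    (hexpr : ∀ (S : Set (P × P)) (p q : P),
      (p, q) ∈ F S ↔ q ∈ sem Tr (D p) (sigmaOf S)) :
    ∀ p q : P, (p, q) ∈ nu F ↔ q ∈ nu (declSem Tr D) p := by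
  intro p q
  have key : ∀ x, x ∈ nu (declSem Tr D) p ↔ ∃ σ, σ ≤ declSem Tr D σ ∧ x ∈ σ p := by
    intro x
    unfold nu
    rw [sSup_apply]
    simp only [Set.iSup_eq_iUnion, Set.mem_iUnion, Subtype.exists, Set.mem_setOf_eq,
      exists_prop]
  rw [key]
  constructor
  · rintro ⟨S, hS, hpq⟩
    refine ⟨sigmaOf S, ?_, hpq⟩
    intro r x hx
    exact (hexpr S r x).mp (hS hx)
  · rintro ⟨σ, hσ, hq⟩
    refine ⟨{x | x.2 ∈ σ x.1}, ?_, hq⟩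
    intro ⟨r, x⟩ hx
    have : σ = sigmaOf {x | x.2 ∈ σ x.1} := rfl
    exact (hexpr _ r x).mpr (this ▸ hσ r hx)
end

section
/- Let (P, A, →) be a labelled transition system with P and A finite, I = P, and let D(p) = ⋀_{a ∈ A} ⋀_{p' : p →a p'} ⟨a⟩X_{p'} and D̃(p) = ⋀_{a ∈ A} [a] ⋁_{p' : p →a p'} X_{p'} be declarations in Hennessy–Milner logic with variables indexed by P. Define F by (p,q) ∈ F(S) iff for all a, p' with p →a p' there exists q' with q →a q' and (p',q') ∈ S, F̃(S) = (F(S⁻¹))⁻¹, and bisimilarity ∼_bisim = ν(F ∩ F̃) where (F ∩ F̃)(S) = F(S) ∩ F̃(S). Let D_bisim(p) = D(p) ∧ D̃(p). Then D_bisim characterizes ∼_bisim: for all p, q ∈ P, p ∼_bisim q if and only if q ∈ (νV⟦D_bisim⟧)(p). -/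
lemma nu_eq_of_orderIso {α β : Type*} [CompleteLattice α] [CompleteLattice β] (e : α ≃o β)
    {f : α → α} {g : β → β} (h : ∀ x, g (e x) = e (f x)) : nu g = e (nu f) := by
  rw [nu, nu, e.map_sSup_eq_sSup_symm_preimage]
  congr 1
  ext y
  simp only [Set.mem_ofPred_eq, Set.mem_preimage, ← e.le_iff_le, e.apply_symm_apply, ← h]

def sigmaOfOrderIso (P : Type*) : Set (P × P) ≃o (P → Set P) where
  toFun := sigmaOf
  invFun σ := {x | x.2 ∈ σ x.1}
  left_inv _ := rfl
  right_inv _ := rfl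
  map_rel_iff' := ⟨fun h ⟨p, _⟩ hpq => h p hpq, fun h _ _ hpq => h hpq⟩

section Semantics

variable {P A I : Type*} (Tr : P → A → P → Prop)

lemma mem_sem_bigAnd (L : List (Formula A I)) (σ : I → Set P) (q : P) :
    q ∈ sem Tr (bigAnd L) σ ↔ ∀ f ∈ L, q ∈ sem Tr f σ := by
  induction L with
  | nil => simp [bigAnd, sem]
  | cons f fs ih => simp [bigAnd, sem, ih]

lemma mem_sem_bigOr (L : List (Formula A I)) (σ : I → Set P) (q : P) :
    q ∈ sem Tr (bigOr L) σ ↔ ∃ f ∈ L, q ∈ sem Tr f σ := by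
  induction L with
  | nil => simp [bigOr, sem]
  | cons f fs ih => simp [bigOr, sem, ih]

variable [Fintype P] [Fintype A] [∀ p a p', Decidable (Tr p a p')]

lemma mem_sem_Dsim (p q : P) (σ : P → Set P) :
    q ∈ sem Tr (Dsim Tr p) σ ↔ ∀ (a : A) (p' : P), Tr p a p' → ∃ q', Tr q a q' ∧ q' ∈ σ p' := by
  simp [Dsim, mem_sem_bigAnd, sem]

lemma mem_sem_Dop (p q : P) (σ : P → Set P) :
    q ∈ sem Tr (Dop Tr p) σ ↔ ∀ (a : A) (q' : P), Tr q a q' → ∃ p', Tr p a p' ∧ q' ∈ σ p' := by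
  simp [Dop, mem_sem_bigAnd, mem_sem_bigOr, sem]

lemma declSem_sigmaOf (S : Set (P × P)) :
    declSem Tr (fun p => .and (Dsim Tr p) (Dop Tr p)) (sigmaOf S) =
      sigmaOf (Fsim Tr S ∩ Fop Tr S) := by
  ext p q
  simp only [declSem, sem, Set.mem_inter_iff, mem_sem_Dsim, mem_sem_Dop, Fsim, Fop, relInv,
    sigmaOf, Set.mem_ofPred_eq]

end Semantics

/-- For a finite LTS, the declaration
D_bisim(p) = D(p) ∧ D̃(p) characterizes bisimilarity
∼_bisim = ν(F ∩ F̃), where (F ∩ F̃)(S) = F(S) ∩ F̃(S). -/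
theorem stmt15 {P A : Type*} [Fintype P] [Fintype A] (Tr : P → A → P → Prop)
    [∀ p a p', Decidable (Tr p a p')] :
    ∀ p q : P,
      (p, q) ∈ nu (fun S : Set (P × P) => Fsim Tr S ∩ Fop Tr S) ↔
        q ∈ nu (declSem Tr (fun p => Formula.and (Dsim Tr p) (Dop Tr p))) p := by
  intro p q
  rw [nu_eq_of_orderIso (sigmaOfOrderIso P) (f := fun S => Fsim Tr S ∩ Fop Tr S)
    (declSem_sigmaOf Tr)]
  rfl
end

section
/- Let (P, A, →) be a labelled transition system with P and A finite, I = P, and consider Hennessy–Milner logic with variables indexed by P. Let D(p) = ⋀_{a ∈ A} ⋀_{p' : p →a p'} ⟨a⟩X_{p'} and D̃(p) = ⋀_{a ∈ A} [a] ⋁_{p' : p →a p'} X_{p'}. Define F(S) = {(p,q) | ∀a ∀p'. p →a p' ⟹ ∃q'. q →a q' ∧ (p',q') ∈ S} and F̃(S) = (F(S⁻¹))⁻¹, and simulation equivalence ∼_sim = νF ∩ νF̃. Then the declaration D_simeq given semantically by the constant function σ ↦ (p ↦ (νV⟦D⟧)(p) ∩ (νV⟦D̃⟧)(p)) characterizes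 ∼_sim: for all p, q ∈ P, p ∼_sim q if and only if q ∈ (νV⟦D⟧)(p) ∩ (νV⟦D̃⟧)(p). -/
lemma mem_bigAnd {P A I : Type*} (Tr : P → A → P → Prop) (L : List (Formula A I))
    (σ : I → Set P) (p : P) :
    p ∈ sem Tr (bigAnd L) σ ↔ ∀ f ∈ L, p ∈ sem Tr f σ := by
  induction L with
  | nil => simp [bigAnd, sem]
  | cons f fs ih => simp [bigAnd, sem, ih]

lemma mem_bigOr {P A I : Type*} (Tr : P → A → P → Prop) (L : List (Formula A I))
    (σ : I → Set P) (p : P) :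
    p ∈ sem Tr (bigOr L) σ ↔ ∃ f ∈ L, p ∈ sem Tr f σ := by
  induction L with
  | nil => simp [bigOr, sem]
  | cons f fs ih => simp [bigOr, sem, ih]

lemma mem_Dsim {P A : Type*} [Fintype P] [Fintype A] (Tr : P → A → P → Prop)
    [∀ p a p', Decidable (Tr p a p')] (p q : P) (σ : P → Set P) :
    q ∈ sem Tr (Dsim Tr p) σ ↔
      ∀ (a : A) (p' : P), Tr p a p' → ∃ q', Tr q a q' ∧ q' ∈ σ p' := by
  simp [Dsim, mem_bigAnd, sem]

lemma mem_Dop {P A : Type*} [Fintype P] [Fintype A] (Tr : P → A → P → Prop)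
    [∀ p a p', Decidable (Tr p a p')] (p q : P) (σ : P → Set P) :
    q ∈ sem Tr (Dop Tr p) σ ↔
      ∀ (a : A) (q' : P), Tr q a q' → ∃ p', Tr p a p' ∧ q' ∈ σ p' := by
  simp [Dop, mem_bigAnd, mem_bigOr, sem]

lemma mem_nu_rel {P : Type*} (f : Set (P × P) → Set (P × P)) (x : P × P) :
    x ∈ nu f ↔ ∃ S, S ⊆ f S ∧ x ∈ S := by
  constructor
  · intro hx
    rw [nu, Set.sSup_eq_sUnion] at hx
    rcases hx with ⟨S, hS, hxS⟩
    exact ⟨S, hS, hxS⟩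
  · rintro ⟨S, hS, hxS⟩
    exact le_sSup (show S ∈ {x | x ≤ f x} from hS) hxS

lemma mem_nu_fun {P : Type*} (g : (P → Set P) → (P → Set P)) (p q : P) :
    q ∈ nu g p ↔ ∃ σ, σ ≤ g σ ∧ q ∈ σ p := by
  constructor
  · intro hq
    rw [nu, sSup_apply] at hq
    simp only [Set.iSup_eq_iUnion, Set.mem_iUnion] at hq
    obtain ⟨⟨σ, hσ⟩, hqs⟩ := hq
    exact ⟨σ, hσ, hqs⟩
  · rintro ⟨σ, hσ, hqσ⟩
    exact le_sSup (show σ ∈ {x | x ≤ g x} from hσ) p hqσ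

lemma nu_Fsim_iff {P A : Type*} [Fintype P] [Fintype A] (Tr : P → A → P → Prop)
    [∀ p a p', Decidable (Tr p a p')] (p q : P) :
    (p, q) ∈ nu (Fsim Tr) ↔ q ∈ nu (declSem Tr (Dsim Tr)) p := by
  rw [mem_nu_rel, mem_nu_fun]
  constructor
  · rintro ⟨S, hS, hpq⟩
    refine ⟨sigmaOf S, fun r => ?_, hpq⟩
    intro s hs
    rw [declSem, mem_Dsim]
    exact hS hs
  · rintro ⟨σ, hσ, hq⟩
    refine ⟨{x | x.2 ∈ σ x.1}, ?_, hq⟩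
    rintro ⟨r, s⟩ hs
    have := hσ r hs
    rw [declSem, mem_Dsim] at this
    exact this

lemma nu_Fop_iff {P A : Type*} [Fintype P] [Fintype A] (Tr : P → A → P → Prop)
    [∀ p a p', Decidable (Tr p a p')] (p q : P) :
    (p, q) ∈ nu (Fop Tr) ↔ q ∈ nu (declSem Tr (Dop Tr)) p := by
  rw [mem_nu_rel, mem_nu_fun]
  constructor
  · rintro ⟨S, hS, hpq⟩
    refine ⟨sigmaOf S, fun r => ?_, hpq⟩
    intro s hs
    rw [declSem, mem_Dop]
    exact hS hs
  · rintro ⟨σ, hσ, hq⟩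
    refine ⟨{x | x.2 ∈ σ x.1}, ?_, hq⟩
    rintro ⟨r, s⟩ hs
    have := hσ r hs
    rw [declSem, mem_Dop] at this
    exact this

/-- For a finite LTS, simulation equivalence ∼_sim = νF ∩ νF̃ is
characterized by the declaration D_simeq given semantically by the constant
function σ ↦ (p ↦ (νV⟦D⟧)(p) ∩ (νV⟦D̃⟧)(p)): for all p, q ∈ P,
p ∼_sim q iff q ∈ (νV⟦D⟧)(p) ∩ (νV⟦D̃⟧)(p). -/
theorem stmt19 {P A : Type*} [Fintype P] [Fintype A] (Tr : P → A → P → Prop)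
    [∀ p a p', Decidable (Tr p a p')] :
    ∀ p q : P,
      (p, q) ∈ nu (Fsim Tr) ∩ nu (Fop Tr) ↔
        q ∈ nu (declSem Tr (Dsim Tr)) p ∩ nu (declSem Tr (Dop Tr)) p := by
  intro p q
  rw [Set.mem_inter_iff, Set.mem_inter_iff, nu_Fsim_iff, nu_Fop_iff]
end
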